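/- arXiv:1811.05130 — 3 statements merged into one kernel-verified Lean document; each statement's English description precedes it below -/
import Mathlib

section
/- For increasing submodular v, w on {0,...,k}, the optimal social welfare satisfies max_q (v(q)+w(k-q)) = w(k) + Σ_{q=1}^{k} max{0, v̂(q) - w̌(q)}, where v̂(q)=v(q)-v(q-1) and w̌(q)=w(k-q+1)-w(k-q). -/
open Finset

lemma tele_aux (k : ℕ) (v w : ℕ → ℝ) (hv0 : v 0 = 0) :
    ∀ q, q ≤ k → ∑ i ∈ Icc 1 q, ((v i - v (i - 1)) - (w (k - i + 1) - w (k - i)))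
      = v q + w (k - q) - w k := by
  intro q
  induction q with
  | zero => intro _; simp [hv0]
  | succ n ih =>
    intro h
    rw [Finset.sum_Icc_succ_top (by omega : 1 ≤ n + 1), ih (by omega)]
    have h1 : k - (n + 1) + 1 = k - n := by omega
    have h2 : n + 1 - 1 = n := rfl
    rw [h1, h2]
    ring

lemma pick_aux (k : ℕ) (f : ℕ → ℝ) (hmono : ∀ i j, 1 ≤ i → i ≤ j → j ≤ k → f j ≤ f i) :
    ∃ q ≤ k, ∑ i ∈ Icc 1 q, f i = ∑ i ∈ Icc 1 k, max 0 (f i) := by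
  induction k with
  | zero => exact ⟨0, le_refl 0, by simp⟩
  | succ n ih =>
    obtain ⟨q, hq, heq⟩ := ih (fun i j h1 h2 h3 => hmono i j h1 h2 (by omega))
    by_cases hpos : 0 < f (n + 1)
    · refine ⟨n + 1, le_refl _, ?_⟩
      apply Finset.sum_congr rfl
      intro i hi
      simp only [mem_Icc] at hi
      have : 0 < f i := lt_of_lt_of_le hpos (hmono i (n + 1) hi.1 hi.2 (le_refl _))
      exact (max_eq_right this.le).symm
    · refine ⟨q, by omega, ?_⟩
      rw [Finset.sum_Icc_succ_top (by omega : 1 ≤ n + 1), ← heq,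
        max_eq_left (not_lt.mp hpos), add_zero]

/-- Optimal social welfare equals `w(k) + Σ_{q=1}^k max{0, v̂(q) - w̌(q)}`. -/
theorem stmt6 (k : ℕ) (v w : ℕ → ℝ) (hv0 : v 0 = 0) (hw0 : w 0 = 0)
    (hvmono : ∀ x y, x < y → y ≤ k → v x < v y)
    (hwmono : ∀ x y, x < y → y ≤ k → w x < w y)
    (hvsub : ∀ x y, 1 ≤ x → x < y → y ≤ k → v x - v (x - 1) ≥ v y - v (y - 1))
    (hwsub : ∀ x y, 1 ≤ x → x < y → y ≤ k → w x - w (x - 1) ≥ w y - w (y - 1)) :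
    (∀ q ≤ k, v q + w (k - q) ≤
        w k + ∑ i ∈ Finset.Icc 1 k, max 0 ((v i - v (i - 1)) - (w (k - i + 1) - w (k - i)))) ∧
    (∃ q ≤ k, v q + w (k - q) =
        w k + ∑ i ∈ Finset.Icc 1 k, max 0 ((v i - v (i - 1)) - (w (k - i + 1) - w (k - i)))) := by
  set f : ℕ → ℝ := fun i => (v i - v (i - 1)) - (w (k - i + 1) - w (k - i)) with hf
  have hmono : ∀ i j, 1 ≤ i → i ≤ j → j ≤ k → f j ≤ f i := by
    intro i j h1 h2 h3
    rcases eq_or_lt_of_le h2 with rfl | hlt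
    · exact le_refl _
    · have hv := hvsub i j h1 hlt h3
      have hw := hwsub (k - j + 1) (k - i + 1) (by omega) (by omega) (by omega)
      have e1 : k - j + 1 - 1 = k - j := by omega
      have e2 : k - i + 1 - 1 = k - i := by omega
      rw [e1, e2] at hw
      simp only [hf]
      linarith
  have htele := tele_aux k v w hv0
  constructor
  · intro q hq
    have ht := htele q hq
    have h1 : ∑ i ∈ Icc 1 q, f i ≤ ∑ i ∈ Icc 1 q, max 0 (f i) :=
      Finset.sum_le_sum (fun i _ => le_max_right 0 (f i))
    have h2 : ∑ i ∈ Icc 1 q, max 0 (f i) ≤ ∑ i ∈ Icc 1 k, max 0 (f i) :=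
      Finset.sum_le_sum_of_subset_of_nonneg (Finset.Icc_subset_Icc_right hq)
        (fun i _ _ => le_max_left 0 (f i))
    simp only [hf] at ht h1 h2 ⊢
    linarith
  · obtain ⟨q, hq, heq⟩ := pick_aux k f hmono
    refine ⟨q, hq, ?_⟩
    have ht := htele q hq
    simp only [hf] at ht heq ⊢
    linarith
end

section
/- The multi-unit fixed price mechanism with S ⊆ {1,...,k} is dominant-strategy incentive compatible for increasing submodular valuations: for any fixed seller report w, the buyer's utility v(q) - q·p at the resulting traded quantity q = min{max τ_B(v'), max τ_S(w)} (with truthful tie-breaking) when reporting v' is maximized by reporting v' = v, and symmetrically for the seller. -/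
/-- Increasing submodular valuation on {0,...,k}. -/
def IncrSubmod (k : ℕ) (v : ℕ → ℝ) : Prop :=
  v 0 = 0 ∧ (∀ x y, x < y → y ≤ k → v x < v y) ∧
    (∀ x y, 1 ≤ x → x < y → y ≤ k → v x - v (x - 1) ≥ v y - v (y - 1))


/-- Lower bound: sum of decreasing increments ≥ count times last increment. -/
lemma L1 (k : ℕ) (u : ℕ → ℝ)
    (hu : ∀ x y, 1 ≤ x → x < y → y ≤ k → u x - u (x-1) ≥ u y - u (y-1)) :
    ∀ n b, b + n ≤ k → (n:ℝ) * (u (b+n) - u (b+n-1)) ≤ u (b+n) - u b := by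
  intro n
  induction n with
  | zero => intro b _; simp
  | succ n ih =>
    intro b hb
    have h1 := ih b (by omega)
    have e1 : b + (n+1) = b + n + 1 := by omega
    have e2 : b + n + 1 - 1 = b + n := by omega
    rcases Nat.eq_zero_or_pos n with hn | hn
    · subst hn; simp only [e1, e2, Nat.add_zero]; push_cast; linarith
    · have hd : u (b+n+1) - u (b+n) ≤ u (b+n) - u (b+n-1) := by
        have := hu (b+n) (b+n+1) (by omega) (by omega) (by omega)
        rwa [e2] at this
      have hmul : (n:ℝ) * (u (b+n+1) - u (b+n)) ≤ (n:ℝ) * (u (b+n) - u (b+n-1)) :=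
        mul_le_mul_of_nonneg_left hd (by positivity)
      rw [e1, e2]; push_cast; nlinarith

/-- Upper bound: sum of decreasing increments ≤ count times first increment. -/
lemma L2 (k : ℕ) (u : ℕ → ℝ)
    (hu : ∀ x y, 1 ≤ x → x < y → y ≤ k → u x - u (x-1) ≥ u y - u (y-1)) :
    ∀ n s, s + n ≤ k → u (s+n) - u s ≤ (n:ℝ) * (u (s+1) - u s) := by
  intro n
  induction n with
  | zero => intro s _; simp
  | succ n ih =>
    intro s hs
    have h1 := ih (s+1) (by omega)
    have e1 : s + 1 + n = s + (n+1) := by omega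
    rw [e1] at h1
    rcases Nat.eq_zero_or_pos n with hn | hn
    · subst hn; simp at h1 ⊢
    · have hd : u (s+2) - u (s+1) ≤ u (s+1) - u s := by
        have := hu (s+1) (s+2) (by omega) (by omega) (by omega)
        simpa using this
      have hmul : (n:ℝ) * (u (s+2) - u (s+1)) ≤ (n:ℝ) * (u (s+1) - u s) :=
        mul_le_mul_of_nonneg_left hd (by positivity)
      have e2 : s + 1 + 1 = s + 2 := by omega
      rw [e2] at h1
      push_cast; nlinarith

/-- A discrete concave function on {0..k}: if `u b ≤ u a` then `u b ≤ u s` for any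
`b ≤ s ≤ a`. -/
lemma concave_mid (k : ℕ) (u : ℕ → ℝ)
    (hu : ∀ x y, 1 ≤ x → x < y → y ≤ k → u x - u (x-1) ≥ u y - u (y-1))
    (b s a : ℕ) (hbs : b ≤ s) (hsa : s ≤ a) (hak : a ≤ k) (h : u b ≤ u a) :
    u b ≤ u s := by
  rcases eq_or_lt_of_le hbs with rfl | hbs
  · exact le_refl _
  rcases eq_or_lt_of_le hsa with rfl | hsa
  · exact h
  by_contra hlt
  push_neg at hlt
  have h1 := L1 k u hu (s - b) b (by omega)
  have e1 : b + (s - b) = s := by omega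
  rw [e1] at h1
  have h2 := L2 k u hu (a - s) s (by omega)
  have e2 : s + (a - s) = a := by omega
  rw [e2] at h2
  have hds : u s - u (s-1) < 0 := by
    have hn : (1:ℝ) ≤ ((s - b : ℕ) : ℝ) := by exact_mod_cast Nat.one_le_iff_ne_zero.mpr (by omega)
    nlinarith
  have hdd : u (s+1) - u s ≤ u s - u (s-1) := by
    have := hu s (s+1) (by omega) (by omega) (by omega)
    simpa using this
  have hn2 : (1:ℝ) ≤ ((a - s : ℕ) : ℝ) := by exact_mod_cast Nat.one_le_iff_ne_zero.mpr (by omega)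
  nlinarith

/-- Theorem A.2 (DSIC part): in the multi-unit fixed price mechanism with per-unit price
`p`, tradable set `S ∪ {0}`, and traded quantity `min (max τ_B(v), max τ_S(w))`,
truthful reporting maximizes each agent's utility, for any fixed report of the other. -/
theorem stmt17 (k : ℕ) (p : ℝ) (hp : 0 ≤ p) (S : Finset ℕ) (hS : S ⊆ Finset.Icc 1 k)
    (bq sq : (ℕ → ℝ) → ℕ)
    (hbq : ∀ v, IncrSubmod k v → bq v ∈ insert 0 S ∧
      ∀ r ∈ insert 0 S, v r - (r : ℝ) * p ≤ v (bq v) - ((bq v : ℕ) : ℝ) * p)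
    (hsq : ∀ w, IncrSubmod k w → sq w ∈ insert 0 S ∧
      ∀ r ∈ insert 0 S, w (k - r) + (r : ℝ) * p ≤ w (k - sq w) + ((sq w : ℕ) : ℝ) * p) :
    (∀ v w v', IncrSubmod k v → IncrSubmod k w → IncrSubmod k v' →
      v (min (bq v') (sq w)) - ((min (bq v') (sq w) : ℕ) : ℝ) * p ≤
      v (min (bq v) (sq w)) - ((min (bq v) (sq w) : ℕ) : ℝ) * p) ∧
    (∀ v w w', IncrSubmod k v → IncrSubmod k w → IncrSubmod k w' →
      w (k - min (bq v) (sq w')) + ((min (bq v) (sq w') : ℕ) : ℝ) * p ≤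
      w (k - min (bq v) (sq w)) + ((min (bq v) (sq w) : ℕ) : ℝ) * p) := by
  have memk : ∀ r ∈ insert 0 S, r ≤ k := by
    intro r hr
    rcases Finset.mem_insert.mp hr with rfl | hr
    · exact Nat.zero_le k
    · exact (Finset.mem_Icc.mp (hS hr)).2
  constructor
  · -- buyer
    intro v w v' hv hw hv'
    obtain ⟨ha_mem, ha_opt⟩ := hbq v hv
    obtain ⟨hb_mem, _⟩ := hbq v' hv'
    obtain ⟨hs_mem, _⟩ := hsq w hw
    set a := bq v with ha_def
    set b := bq v' with hb_def
    set s := sq w with hs_def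
    -- utility function
    set u : ℕ → ℝ := fun r => v r - (r:ℝ) * p with hu_def
    have hu : ∀ x y, 1 ≤ x → x < y → y ≤ k → u x - u (x-1) ≥ u y - u (y-1) := by
      intro x y hx hxy hyk
      have hvv := hv.2.2 x y hx hxy hyk
      have cx : ((x - 1 : ℕ) : ℝ) = (x:ℝ) - 1 := by
        rw [Nat.cast_sub hx]; norm_num
      have cy : ((y - 1 : ℕ) : ℝ) = (y:ℝ) - 1 := by
        rw [Nat.cast_sub (by omega)]; norm_num
      simp only [hu_def, cx, cy]
      ring_nf
      ring_nf at hvv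
      linarith
    show u (min b s) ≤ u (min a s)
    rcases le_total b s with hbs | hsb
    · rw [min_eq_left hbs]
      rcases le_total a s with has | hsa
      · rw [min_eq_left has]
        exact ha_opt b hb_mem
      · rw [min_eq_right hsa]
        exact concave_mid k u hu b s a hbs hsa (memk a ha_mem) (ha_opt b hb_mem)
    · rw [min_eq_right hsb]
      rcases le_total a s with has | hsa
      · rw [min_eq_left has]
        exact ha_opt s hs_mem
      · rw [min_eq_right hsa]
  · -- seller
    intro v w w' hv hw hw'
    obtain ⟨ha_mem, _⟩ := hbq v hv
    obtain ⟨hs_mem, hs_opt⟩ := hsq w hw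
    obtain ⟨hs'_mem, _⟩ := hsq w' hw'
    set a := bq v with ha_def
    set s := sq w with hs_def
    set t := sq w' with ht_def
    set g : ℕ → ℝ := fun r => w (k - r) + (r:ℝ) * p with hg_def
    have hg : ∀ x y, 1 ≤ x → x < y → y ≤ k → g x - g (x-1) ≥ g y - g (y-1) := by
      intro x y hx hxy hyk
      have hww := hw.2.2 (k - y + 1) (k - x + 1) (by omega) (by omega) (by omega)
      have e1 : k - y + 1 - 1 = k - y := by omega
      have e2 : k - x + 1 - 1 = k - x := by omega
      have e3 : k - (y - 1) = k - y + 1 := by omega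
      have e4 : k - (x - 1) = k - x + 1 := by omega
      rw [e1, e2] at hww
      have cx : ((x - 1 : ℕ) : ℝ) = (x:ℝ) - 1 := by
        rw [Nat.cast_sub hx]; norm_num
      have cy : ((y - 1 : ℕ) : ℝ) = (y:ℝ) - 1 := by
        rw [Nat.cast_sub (by omega)]; norm_num
      simp only [hg_def, e3, e4, cx, cy]
      linarith
    show g (min a t) ≤ g (min a s)
    rcases le_total a t with hat | hta
    · rw [min_eq_left hat]
      rcases le_total a s with has | hsa
      · rw [min_eq_left has]
      · rw [min_eq_right hsa]
        exact hs_opt a ha_mem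
    · rw [min_eq_right hta]
      rcases le_total a s with has | hsa
      · rw [min_eq_left has]
        exact concave_mid k g hg t a s hta has (memk s hs_mem) (hs_opt t hs'_mem)
      · rw [min_eq_right hsa]
        exact hs_opt t hs'_mem
end

section
/- Suppose a direct-revelation multi-unit bilateral trade mechanism is IR, SBB, and DSIC for increasing valuations, and there exists a fixed unit price p such that the payment for trading q units is always q·p, with p > 0. If the mechanism can trade two distinct positive quantities q < q' (each realized on some valuation profile), then there exist increasing (non-submodular) valuation functions v*, w* such that the buyer with v* strictly prefers the outcome (q, qp) to (q', q'p) and to no trade, the seller with w* strictly prefers (q', q'p) to (q, qp) and to no trade, and both outcomes are available to each agent via some report — yielding a contradiction with DSIC. Hence at most one positive quantity can ever be traded. -/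
/-- Monotonically increasing valuation on {0,...,k} with value 0 at 0. -/
def Incr (k : ℕ) (v : ℕ → ℝ) : Prop :=
  v 0 = 0 ∧ ∀ x y, x < y → y ≤ k → v x < v y

lemma incrAux (k : ℕ) (p : ℝ) (hp : 0 < p) (S : ℕ → ℝ) (h0 : S 0 = 0)
    (hb : ∀ x, |S x| ≤ 3 * p / 8) :
    Incr k (fun x => (x : ℝ) * p + S x) := by
  refine ⟨by simp [h0], fun x y hxy _ => ?_⟩
  have h1 : (x : ℝ) + 1 ≤ (y : ℝ) := by exact_mod_cast hxy
  have hx := abs_le.1 (hb x)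
  have hy := abs_le.1 (hb y)
  have h2 : ((x:ℝ)+1) * p ≤ (y:ℝ) * p := mul_le_mul_of_nonneg_right h1 hp.le
  simp only []
  nlinarith [hx.1, hx.2, hy.1, hy.2]

/-- Key step of Theorem A.7 for general increasing valuations: an IR, SBB, DSIC
mechanism with fixed unit price `p > 0` (payment `Q·p`) can trade at most one
positive quantity: two positive traded quantities must coincide. -/
theorem stmt19 (k : ℕ) (p : ℝ) (hp : 0 < p)
    (Q : (ℕ → ℝ) → (ℕ → ℝ) → ℕ) (P : (ℕ → ℝ) → (ℕ → ℝ) → ℝ)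
    (hQk : ∀ v w, Incr k v → Incr k w → Q v w ≤ k)
    (hP : ∀ v w, Incr k v → Incr k w → P v w = (Q v w : ℝ) * p)
    (hIR : ∀ v w, Incr k v → Incr k w →
      0 ≤ v (Q v w) - P v w ∧ w k ≤ w (k - Q v w) + P v w)
    (hDSICb : ∀ v w v', Incr k v → Incr k w → Incr k v' →
      v (Q v' w) - P v' w ≤ v (Q v w) - P v w)
    (hDSICs : ∀ v w w', Incr k v → Incr k w → Incr k w' →
      w (k - Q v w') + P v w' ≤ w (k - Q v w) + P v w) :
    ∀ v w v' w', Incr k v → Incr k w → Incr k v' → Incr k w' →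
      0 < Q v w → 0 < Q v' w' → Q v w = Q v' w' := by
  intro v w v' w' hv hw hv' hw' hq hq'
  by_contra hne
  set q₁ := Q v w with hq₁def
  set q₂ := Q v' w' with hq₂def
  have h1ne : q₁ ≠ 0 := hq.ne'
  have h2ne : q₂ ≠ 0 := hq'.ne'
  set ε := p / 8 with hεdef
  have hε0 : 0 < ε := by positivity
  -- utility patterns
  set c1 : ℕ → ℝ := fun x => if x = 0 then 0 else if x = q₁ then ε else -ε with hc1
  set c2 : ℕ → ℝ := fun x => if x = 0 then 0 else if x = q₂ then ε else -ε with hc2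
  set c3 : ℕ → ℝ := fun x => if x = 0 then 0 else if x = q₂ then 2*ε else
      if x = q₁ then ε else -ε with hc3
  set d3 : ℕ → ℝ := fun x => if x = 0 then 0 else if x = q₁ then 2*ε else
      if x = q₂ then ε else -ε with hd3
  have pat1 : ∀ x, -ε ≤ c1 x ∧ c1 x ≤ 2*ε := by
    intro x; simp only [hc1]; split_ifs <;> constructor <;> linarith
  have pat2 : ∀ x, -ε ≤ c2 x ∧ c2 x ≤ 2*ε := by
    intro x; simp only [hc2]; split_ifs <;> constructor <;> linarith
  have pat3 : ∀ x, -ε ≤ c3 x ∧ c3 x ≤ 2*ε := by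
    intro x; simp only [hc3]; split_ifs <;> constructor <;> linarith
  have pat4 : ∀ x, -ε ≤ d3 x ∧ d3 x ≤ 2*ε := by
    intro x; simp only [hd3]; split_ifs <;> constructor <;> linarith
  have bnd : ∀ (c : ℕ → ℝ), (∀ x, -ε ≤ c x ∧ c x ≤ 2*ε) → ∀ x, |c x| ≤ 3*p/8 := by
    intro c hc x; rw [abs_le]
    obtain ⟨hL, hR⟩ := hc x
    constructor <;> [linarith; linarith]
  have bndS : ∀ (d : ℕ → ℝ), (∀ x, -ε ≤ d x ∧ d x ≤ 2*ε) →
      ∀ x, |d (k-x) - d k| ≤ 3*p/8 := by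
    intro d hd x; rw [abs_le]
    obtain ⟨h1, h2⟩ := hd (k-x); obtain ⟨h3, h4⟩ := hd k
    constructor <;> linarith
  -- valuations
  set v1 : ℕ → ℝ := fun x => (x:ℝ)*p + c1 x with hv1def
  set v2 : ℕ → ℝ := fun x => (x:ℝ)*p + c2 x with hv2def
  set v3 : ℕ → ℝ := fun x => (x:ℝ)*p + c3 x with hv3def
  set w1 : ℕ → ℝ := fun x => (x:ℝ)*p + (c1 (k-x) - c1 k) with hw1def
  set w2 : ℕ → ℝ := fun x => (x:ℝ)*p + (c2 (k-x) - c2 k) with hw2def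
  set w3 : ℕ → ℝ := fun x => (x:ℝ)*p + (d3 (k-x) - d3 k) with hw3def
  have hc10 : c1 0 = 0 := by simp [hc1]
  have hc20 : c2 0 = 0 := by simp [hc2]
  have hc30 : c3 0 = 0 := by simp [hc3]
  have hd30 : d3 0 = 0 := by simp [hd3]
  have hv1I : Incr k v1 := by rw [hv1def]; exact incrAux k p hp c1 hc10 (bnd c1 pat1)
  have hv2I : Incr k v2 := by rw [hv2def]; exact incrAux k p hp c2 hc20 (bnd c2 pat2)
  have hv3I : Incr k v3 := by rw [hv3def]; exact incrAux k p hp c3 hc30 (bnd c3 pat3)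
  have hw1I : Incr k w1 := by
    rw [hw1def]
    exact incrAux k p hp (fun x => c1 (k-x) - c1 k) (by simp) (bndS c1 pat1)
  have hw2I : Incr k w2 := by
    rw [hw2def]
    exact incrAux k p hp (fun x => c2 (k-x) - c2 k) (by simp) (bndS c2 pat2)
  have hw3I : Incr k w3 := by
    rw [hw3def]
    exact incrAux k p hp (fun x => d3 (k-x) - d3 k) (by simp) (bndS d3 pat4)
  -- evaluation lemmas
  have ev_b : ∀ (c : ℕ → ℝ) (V a b : ℕ → ℝ), V = (fun x : ℕ => (x:ℝ)*p + c x) →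
      Incr k a → Incr k b → V (Q a b) - P a b = c (Q a b) := by
    intro c V a b hV ha hb
    rw [hV, hP a b ha hb]; ring
  have ev_s : ∀ (d : ℕ → ℝ) (W a b : ℕ → ℝ),
      W = (fun x : ℕ => (x:ℝ)*p + (d (k-x) - d k)) →
      Incr k a → Incr k b →
      W (k - Q a b) + P a b = (k:ℝ)*p - d k + d (Q a b) := by
    intro d W a b hW ha hb
    have hm : Q a b ≤ k := hQk a b ha hb
    have h1 : ((k - Q a b : ℕ) : ℝ) = (k:ℝ) - (Q a b : ℝ) := by
      push_cast [hm]; ring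
    have h2 : k - (k - Q a b) = Q a b := Nat.sub_sub_self hm
    rw [hW]; simp only [h2]
    rw [hP a b ha hb, h1]; ring
  have ev_sk : ∀ (d : ℕ → ℝ) (W : ℕ → ℝ),
      W = (fun x : ℕ => (x:ℝ)*p + (d (k-x) - d k)) → d 0 = 0 →
      W k = (k:ℝ)*p - d k := by
    intro d W hW hd0
    rw [hW]; simp [Nat.sub_self, hd0]; ring
  -- forcing lemmas
  have Fc1 : ∀ y, ε ≤ c1 y → y = q₁ := by
    intro y hy; simp only [hc1] at hy; split_ifs at hy with h0 h1
    · linarith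
    · exact h1
    · linarith
  have Fc1' : ∀ y, 0 ≤ c1 y → y = 0 ∨ y = q₁ := by
    intro y hy; simp only [hc1] at hy; split_ifs at hy with h0 h1
    · exact Or.inl h0
    · exact Or.inr h1
    · linarith
  have Fc2 : ∀ y, ε ≤ c2 y → y = q₂ := by
    intro y hy; simp only [hc2] at hy; split_ifs at hy with h0 h1
    · linarith
    · exact h1
    · linarith
  have Fc2' : ∀ y, 0 ≤ c2 y → y = 0 ∨ y = q₂ := by
    intro y hy; simp only [hc2] at hy; split_ifs at hy with h0 h1
    · exact Or.inl h0
    · exact Or.inr h1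
    · linarith
  have Fc3top : ∀ y, 2*ε ≤ c3 y → y = q₂ := by
    intro y hy; simp only [hc3] at hy; split_ifs at hy with h0 h1 h2
    · linarith
    · exact h1
    · linarith
    · linarith
  have Fc3mid : ∀ y, ε ≤ c3 y → y = q₁ ∨ y = q₂ := by
    intro y hy; simp only [hc3] at hy; split_ifs at hy with h0 h1 h2
    · linarith
    · exact Or.inr h1
    · exact Or.inl h2
    · linarith
  have Fd3top : ∀ y, 2*ε ≤ d3 y → y = q₁ := by
    intro y hy; simp only [hd3] at hy; split_ifs at hy with h0 h1 h2
    · linarith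
    · exact h1
    · linarith
    · linarith
  have Fd3mid : ∀ y, ε ≤ d3 y → y = q₁ ∨ y = q₂ := by
    intro y hy; simp only [hd3] at hy; split_ifs at hy with h0 h1 h2
    · linarith
    · exact Or.inl h1
    · exact Or.inr h2
    · linarith
  -- pattern values
  have vc1q : c1 q₁ = ε := by simp [hc1, h1ne]
  have vc2q : c2 q₂ = ε := by simp [hc2, h2ne]
  have vc3q2 : c3 q₂ = 2*ε := by simp [hc3, h2ne]
  have vc3q1 : c3 q₁ = ε := by simp [hc3, h1ne, hne]
  have vd3q1 : d3 q₁ = 2*ε := by simp [hd3, h1ne]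
  have vd3q2 : d3 q₂ = ε := by simp [hd3, h2ne, Ne.symm hne]
  -- Step 1 : Q v1 w = q₁
  have step1 : Q v1 w = q₁ := by
    have h := hDSICb v1 w v hv1I hw hv
    rw [ev_b c1 v1 v w hv1def hv hw, ev_b c1 v1 v1 w hv1def hv1I hw] at h
    rw [← hq₁def, vc1q] at h
    exact Fc1 _ h
  -- Step 2 : Q v1 w1 = q₁
  have step2 : Q v1 w1 = q₁ := by
    have h := hDSICs v1 w1 w hv1I hw1I hw
    rw [ev_s c1 w1 v1 w hw1def hv1I hw, ev_s c1 w1 v1 w1 hw1def hv1I hw1I] at h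
    rw [step1, vc1q] at h
    exact Fc1 _ (by linarith)
  -- Step 3 : Q v3 w1 = q₁
  have step3 : Q v3 w1 = q₁ := by
    have hA := hDSICb v3 w1 v1 hv3I hw1I hv1I
    rw [ev_b c3 v3 v1 w1 hv3def hv1I hw1I, ev_b c3 v3 v3 w1 hv3def hv3I hw1I] at hA
    rw [step2, vc3q1] at hA
    have hmem := Fc3mid _ hA
    have hB := (hIR v3 w1 hv3I hw1I).2
    rw [ev_sk c1 w1 hw1def hc10, ev_s c1 w1 v3 w1 hw1def hv3I hw1I] at hB
    have hmem' := Fc1' _ (by linarith)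
    rcases hmem with h | h
    · exact h
    · rcases hmem' with h' | h'
      · exact absurd (h ▸ h') h2ne
      · exact absurd (h ▸ h').symm hne
  -- Step 4 : Q v2 w' = q₂
  have step4 : Q v2 w' = q₂ := by
    have h := hDSICb v2 w' v' hv2I hw' hv'
    rw [ev_b c2 v2 v' w' hv2def hv' hw', ev_b c2 v2 v2 w' hv2def hv2I hw'] at h
    rw [← hq₂def, vc2q] at h
    exact Fc2 _ h
  -- Step 5 : Q v2 w2 = q₂
  have step5 : Q v2 w2 = q₂ := by
    have h := hDSICs v2 w2 w' hv2I hw2I hw'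
    rw [ev_s c2 w2 v2 w' hw2def hv2I hw', ev_s c2 w2 v2 w2 hw2def hv2I hw2I] at h
    rw [step4, vc2q] at h
    exact Fc2 _ (by linarith)
  -- Step 7 : Q v2 w3 = q₂
  have step7 : Q v2 w3 = q₂ := by
    have hA := hDSICs v2 w3 w2 hv2I hw3I hw2I
    rw [ev_s d3 w3 v2 w2 hw3def hv2I hw2I, ev_s d3 w3 v2 w3 hw3def hv2I hw3I] at hA
    rw [step5, vd3q2] at hA
    have hmem := Fd3mid _ (by linarith)
    have hB := (hIR v2 w3 hv2I hw3I).1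
    rw [ev_b c2 v2 v2 w3 hv2def hv2I hw3I] at hB
    have hmem' := Fc2' _ hB
    rcases hmem with h | h
    · rcases hmem' with h' | h'
      · exact absurd (h ▸ h') h1ne
      · exact absurd (h ▸ h') hne
    · exact h
  -- Step 8 : Q v3 w3 = q₁
  have step8 : Q v3 w3 = q₁ := by
    have h := hDSICs v3 w3 w1 hv3I hw3I hw1I
    rw [ev_s d3 w3 v3 w1 hw3def hv3I hw1I, ev_s d3 w3 v3 w3 hw3def hv3I hw3I] at h
    rw [step3, vd3q1] at h
    exact Fd3top _ (by linarith)
  -- Step 9 : Q v3 w3 = q₂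
  have step9 : Q v3 w3 = q₂ := by
    have h := hDSICb v3 w3 v2 hv3I hw3I hv2I
    rw [ev_b c3 v3 v2 w3 hv3def hv2I hw3I, ev_b c3 v3 v3 w3 hv3def hv3I hw3I] at h
    rw [step7, vc3q2] at h
    exact Fc3top _ h
  exact hne (step8.symm.trans step9)
end
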